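/- arXiv:1809.02684 — 8 statements merged into one kernel-verified Lean document; each statement's English description precedes it below -/
import Mathlib

section
/- If (α_1, α_2, ..., α_r) is a graceful permutation of {1, ..., r}, then the cyclic sequence (α_1, α_2, ..., α_r, α_r + r, α_{r-1} + r, ..., α_1 + r), with entries considered as elements of Z_{2r+1}, is a directed rotational terrace for Z_{2r+1}; that is, its entries are exactly the 2r nonzero elements of Z_{2r+1}, and the 2r cyclic consecutive differences (including the wrap-around difference from the last entry back to the first) are pairwise distinct. -/
/-!
Lift the entries to the integers `α_j` and `α_j + r`. Since `α` is a permutation of `1, …, r`,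
these are the `2r` distinct integers `1, …, 2r`, i.e. representatives of the nonzero residues
modulo `2r + 1`. The second half of the sequence is the first half reversed and shifted by `r`,
so its steps are the negatives of those of the first half, which are the graceful differences
`α_{i+1} - α_i` (with distinct absolute values below `r`) followed by the step `r`. Hence the `2r`
steps are pairwise distinct integers in `[-r, r]`, and remain distinct modulo `2r + 1`.
-/

/-- `α` (indexed by `0, …, r-1`) is a graceful permutation of length `r`. -/
def IsGraceful (r : ℕ) (α : ℕ → ℤ) : Prop :=
  (Finset.range r).image α = Finset.Icc (1 : ℤ) (r : ℤ) ∧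
  ∀ i j : ℕ, i + 1 < r → j + 1 < r → |α (i + 1) - α i| = |α (j + 1) - α j| → i = j

theorem Set.InjOn.intCast_zmod {ι : Type*} {f : ι → ℤ} {s : Set ι} {n : ℕ} {c : ℤ}
    (hf : Set.InjOn f s) (hs : Set.MapsTo f s (Set.Ico c (c + n))) :
    Set.InjOn (fun x => (f x : ZMod n)) s := by
  intro x hx y hy hxy
  have hdvd : (n : ℤ) ∣ f y - f x := (ZMod.intCast_eq_intCast_iff_dvd_sub _ _ _).mp hxy
  have hlt : |f y - f x| < n := by
    obtain ⟨hx₁, hx₂⟩ := hs hx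
    obtain ⟨hy₁, hy₂⟩ := hs hy
    rw [abs_sub_lt_iff]
    constructor <;> linarith
  exact hf hx hy (by linarith [Int.eq_zero_of_abs_lt_dvd hdvd hlt])

theorem intCast_zmod_ne_zero_of_pos_of_lt {n : ℕ} {x : ℤ} (hpos : 0 < x) (hlt : x < n) :
    (x : ZMod n) ≠ 0 :=
  fun h => hpos.ne' <| Int.eq_zero_of_dvd_of_nonneg_of_lt hpos.le hlt
    ((ZMod.intCast_zmod_eq_zero_iff_dvd x n).mp h)

theorem Set.InjOn.union_of_eq_neg_comp {ι G : Type*} [AddCommGroup G] [LinearOrder G]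
    [IsOrderedAddMonoid G] {f : ι → G} {s t : Set ι} {ρ : ι → ι} (hst : Disjoint s t)
    (habs : Set.InjOn (fun x => |f x|) s) (hne : ∀ x ∈ s, f x ≠ 0)
    (hρ : Set.MapsTo ρ t s) (hρinj : Set.InjOn ρ t) (hft : ∀ x ∈ t, f x = -f (ρ x)) :
    Set.InjOn f (s ∪ t) := by
  have hs : Set.InjOn f s := fun x hx y hy h => habs hx hy (congrArg abs h)
  refine (Set.injOn_union hst).2
    ⟨hs, fun x hx y hy h => hρinj hx hy (hs (hρ hx) (hρ hy) ?_), ?_⟩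
  · rwa [hft x hx, hft y hy, neg_inj] at h
  · intro x hx y hy h
    rw [hft y hy] at h
    obtain rfl : x = ρ y := habs hx (hρ hy) (by simp only [h, abs_neg])
    exact hne _ hx (self_eq_neg.mp h)

namespace IsGraceful

variable {r : ℕ} {α : ℕ → ℤ}

theorem mem_Icc (hα : IsGraceful r α) {i : ℕ} (hi : i < r) : α i ∈ Finset.Icc 1 (r : ℤ) :=
  hα.1 ▸ Finset.mem_image_of_mem α (Finset.mem_range.2 hi)

theorem injOn (hα : IsGraceful r α) : Set.InjOn α (Set.Iio r) := by
  rw [← Finset.coe_range, ← Finset.card_image_iff, hα.1, Int.card_Icc, Finset.card_range]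
  omega

theorem sub_ne_zero (hα : IsGraceful r α) {i : ℕ} (hi : i + 1 < r) : α (i + 1) - α i ≠ 0 :=
  _root_.sub_ne_zero.2 fun h => by
    have := hα.injOn (by simp only [Set.mem_Iio]; omega) (by simp only [Set.mem_Iio]; omega) h
    omega

theorem abs_sub_lt (hα : IsGraceful r α) {i : ℕ} (hi : i + 1 < r) :
    |α (i + 1) - α i| < r := by
  have h₁ := Finset.mem_Icc.1 (hα.mem_Icc hi)
  have h₀ := Finset.mem_Icc.1 (hα.mem_Icc (Nat.lt_of_succ_lt hi))
  rw [abs_sub_lt_iff]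
  constructor <;> linarith

end IsGraceful

def terraceLift (r : ℕ) (α : ℕ → ℤ) (j : ℕ) : ℤ :=
  if j < r then α j else α (2 * r - 1 - j) + r

def terraceStep (r : ℕ) (α : ℕ → ℤ) (i : ℕ) : ℤ :=
  terraceLift r α ((i + 1) % (2 * r)) - terraceLift r α i

def terracePartner (r i : ℕ) : ℕ :=
  if i + 1 = 2 * r then r - 1 else 2 * r - 2 - i

theorem terracePartner_mapsTo (r : ℕ) :
    Set.MapsTo (terracePartner r) (Set.Ico r (2 * r)) (Set.Iio r) := by
  intro i hi
  simp only [Set.mem_Ico, Set.mem_Iio, terracePartner] at hi ⊢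
  split_ifs <;> omega

theorem terracePartner_injOn (r : ℕ) : Set.InjOn (terracePartner r) (Set.Ico r (2 * r)) := by
  intro i hi j hj h
  simp only [Set.mem_Ico, terracePartner] at hi hj h
  split_ifs at h <;> omega

section Terrace

variable {r : ℕ} {α : ℕ → ℤ}

theorem terraceLift_of_lt {j : ℕ} (hj : j < r) : terraceLift r α j = α j := if_pos hj

theorem terraceLift_reflect {j : ℕ} (hj : j < r) :
    terraceLift r α (2 * r - 1 - j) = α j + r := by
  rw [terraceLift, if_neg (by omega), show 2 * r - 1 - (2 * r - 1 - j) = j by omega]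

theorem terraceLift_mem_Icc (hα : IsGraceful r α) {j : ℕ} (hj : j < 2 * r) :
    terraceLift r α j ∈ Set.Icc 1 (2 * r : ℤ) := by
  unfold terraceLift
  split_ifs with h
  · have := Finset.mem_Icc.1 (hα.mem_Icc h)
    constructor <;> linarith
  · have := Finset.mem_Icc.1 (hα.mem_Icc (show 2 * r - 1 - j < r by omega))
    constructor <;> linarith

theorem terraceLift_injOn (hα : IsGraceful r α) :
    Set.InjOn (terraceLift r α) (Set.Iio (2 * r)) := by
  intro i hi j hj h
  simp only [Set.mem_Iio] at hi hj
  unfold terraceLift at h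
  have hmem : ∀ k < r, 1 ≤ α k ∧ α k ≤ r := fun k hk => Finset.mem_Icc.1 (hα.mem_Icc hk)
  split_ifs at h with hir hjr hjr
  · exact hα.injOn hir hjr h
  · linarith [hmem i hir, hmem (2 * r - 1 - j) (by omega)]
  · linarith [hmem j hjr, hmem (2 * r - 1 - i) (by omega)]
  · have := hα.injOn (show 2 * r - 1 - i < r by omega) (show 2 * r - 1 - j < r by omega)
      (add_right_cancel h)
    omega

theorem terraceStep_of_lt {i : ℕ} (hi : i + 1 < r) : terraceStep r α i = α (i + 1) - α i := by
  rw [terraceStep, Nat.mod_eq_of_lt (by omega), terraceLift_of_lt hi, terraceLift_of_lt (by omega)]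

theorem terraceStep_of_succ_eq {i : ℕ} (hi : i + 1 = r) : terraceStep r α i = r := by
  have := terraceLift_reflect (α := α) (show i < r by omega)
  rw [show 2 * r - 1 - i = i + 1 by omega] at this
  rw [terraceStep, Nat.mod_eq_of_lt (by omega), this, terraceLift_of_lt (by omega)]
  ring

theorem terraceStep_reflect {m : ℕ} (hm : m + 1 < r) :
    terraceStep r α (2 * r - 2 - m) = -terraceStep r α m := by
  have hsucc : (2 * r - 2 - m + 1) % (2 * r) = 2 * r - 1 - m := by
    rw [Nat.mod_eq_of_lt (by omega)]
    omega
  rw [terraceStep, hsucc, terraceLift_reflect (by omega),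
    show 2 * r - 2 - m = 2 * r - 1 - (m + 1) by omega, terraceLift_reflect hm, terraceStep_of_lt hm]
  ring

theorem terraceStep_last (hr : 0 < r) : terraceStep r α (2 * r - 1) = -r := by
  rw [terraceStep, show 2 * r - 1 + 1 = 2 * r by omega, Nat.mod_self,
    show 2 * r - 1 = 2 * r - 1 - 0 by omega, terraceLift_reflect hr, terraceLift_of_lt hr]
  ring

theorem terraceStep_eq_neg_partner {i : ℕ} (hri : r ≤ i) (hi : i < 2 * r) :
    terraceStep r α i = -terraceStep r α (terracePartner r i) := by
  unfold terracePartner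
  split_ifs with hlast
  · rw [terraceStep_of_succ_eq (i := r - 1) (by omega), show i = 2 * r - 1 by omega,
      terraceStep_last (by omega)]
  · obtain ⟨m, hm, rfl⟩ : ∃ m, m + 1 < r ∧ i = 2 * r - 2 - m :=
      ⟨2 * r - 2 - i, by omega, by omega⟩
    rw [terraceStep_reflect hm, show 2 * r - 2 - (2 * r - 2 - m) = m by omega]

theorem terraceStep_ne_zero (hα : IsGraceful r α) {i : ℕ} (hi : i < r) :
    terraceStep r α i ≠ 0 := by
  rcases Nat.lt_or_ge (i + 1) r with h | h
  · rw [terraceStep_of_lt h]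
    exact hα.sub_ne_zero h
  · rw [terraceStep_of_succ_eq (by omega)]
    exact_mod_cast (show r ≠ 0 by omega)

theorem abs_terraceStep_injOn (hα : IsGraceful r α) :
    Set.InjOn (fun i => |terraceStep r α i|) (Set.Iio r) := by
  intro i hi j hj h
  simp only [Set.mem_Iio] at hi hj h
  rcases Nat.lt_or_ge (i + 1) r with hi' | hi' <;> rcases Nat.lt_or_ge (j + 1) r with hj' | hj'
  · rw [terraceStep_of_lt hi', terraceStep_of_lt hj'] at h
    exact hα.2 i j hi' hj' h
  · rw [terraceStep_of_lt hi', terraceStep_of_succ_eq (by omega), Nat.abs_cast] at h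
    exact absurd h (hα.abs_sub_lt hi').ne
  · rw [terraceStep_of_succ_eq (by omega), terraceStep_of_lt hj', Nat.abs_cast] at h
    exact absurd h.symm (hα.abs_sub_lt hj').ne
  · omega

theorem abs_terraceStep_le (hα : IsGraceful r α) {i : ℕ} (hi : i < 2 * r) :
    |terraceStep r α i| ≤ r := by
  have first_half : ∀ k < r, |terraceStep r α k| ≤ r := by
    intro k hk
    rcases Nat.lt_or_ge (k + 1) r with h | h
    · rw [terraceStep_of_lt h]
      exact (hα.abs_sub_lt h).le
    · rw [terraceStep_of_succ_eq (by omega), Nat.abs_cast]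
  rcases Nat.lt_or_ge i r with h | h
  · exact first_half i h
  · rw [terraceStep_eq_neg_partner h hi, abs_neg]
    exact first_half _ (terracePartner_mapsTo r ⟨h, hi⟩)

theorem terraceStep_injOn (hα : IsGraceful r α) :
    Set.InjOn (terraceStep r α) (Set.Iio (2 * r)) := by
  rw [← Set.Iio_union_Ico_eq_Iio (show r ≤ 2 * r by omega)]
  exact (abs_terraceStep_injOn hα).union_of_eq_neg_comp
    (Set.Iio_disjoint_Ici le_rfl |>.mono_right Set.Ico_subset_Ici_self)
    (fun i hi => terraceStep_ne_zero hα hi) (terracePartner_mapsTo r) (terracePartner_injOn r)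
    (fun i hi => terraceStep_eq_neg_partner hi.1 hi.2)

theorem terraceLift_cast_injOn (hα : IsGraceful r α) :
    Set.InjOn (fun j => (terraceLift r α j : ZMod (2 * r + 1))) (Set.Iio (2 * r)) := by
  refine (terraceLift_injOn hα).intCast_zmod (c := 1) fun j hj => ?_
  have := terraceLift_mem_Icc hα hj
  exact ⟨this.1, by push_cast; linarith [this.2]⟩

theorem terraceLift_cast_ne_zero (hα : IsGraceful r α) {j : ℕ} (hj : j < 2 * r) :
    (terraceLift r α j : ZMod (2 * r + 1)) ≠ 0 := by
  have := terraceLift_mem_Icc hα hj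
  exact intCast_zmod_ne_zero_of_pos_of_lt (by linarith [this.1]) (by push_cast; linarith [this.2])

theorem terraceStep_cast_injOn (hα : IsGraceful r α) :
    Set.InjOn (fun i => (terraceStep r α i : ZMod (2 * r + 1))) (Set.Iio (2 * r)) := by
  refine (terraceStep_injOn hα).intCast_zmod (c := -r) fun i hi => ?_
  have := abs_le.1 (abs_terraceStep_le hα hi)
  exact ⟨this.1, by push_cast; linarith [this.2]⟩

end Terrace

theorem graceful_gives_rotational_terrace_general (r : ℕ) (α : ℕ → ℤ)
    (hα : IsGraceful r α)
    (a : ℕ → ZMod (2 * r + 1))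
    (ha : ∀ j < 2 * r, a j = if j < r then ((α j : ℤ) : ZMod (2 * r + 1))
      else ((α (2 * r - 1 - j) + r : ℤ) : ZMod (2 * r + 1))) :
    (Finset.range (2 * r)).image a = Finset.univ.erase (0 : ZMod (2 * r + 1)) ∧
    ∀ i < 2 * r, ∀ j < 2 * r,
      a ((i + 1) % (2 * r)) - a i = a ((j + 1) % (2 * r)) - a j → i = j := by
  have ha' : ∀ j < 2 * r, a j = terraceLift r α j := fun j hj => by
    rw [ha j hj, terraceLift]
    split_ifs <;> rfl
  have hstep : ∀ i < 2 * r, a ((i + 1) % (2 * r)) - a i = terraceStep r α i := fun i hi => by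
    rw [ha' _ (Nat.mod_lt _ (by omega)), ha' i hi, terraceStep, Int.cast_sub]
  constructor
  · refine Finset.eq_of_subset_of_card_le (fun x hx => ?_) ?_
    · obtain ⟨j, hj, rfl⟩ := Finset.mem_image.1 hx
      rw [Finset.mem_range] at hj
      rw [Finset.mem_erase, ha' j hj]
      exact ⟨terraceLift_cast_ne_zero hα hj, Finset.mem_univ _⟩
    · have ha_injOn : Set.InjOn a (Finset.range (2 * r)) := by
        rw [Finset.coe_range]
        exact (terraceLift_cast_injOn hα).congr fun j hj => (ha' j hj).symm
      rw [Finset.card_image_of_injOn ha_injOn, Finset.card_range,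
        Finset.card_erase_of_mem (Finset.mem_univ _), Finset.card_univ, ZMod.card]
      omega
  · intro i hi j hj h
    rw [hstep i hi, hstep j hj] at h
    exact terraceStep_cast_injOn hα hi hj h

/-- From a graceful permutation `(α_1, …, α_r)`, the cyclic sequence
`(α_1, …, α_r, α_r + r, …, α_1 + r)` in `ZMod (2r+1)` is a directed rotational terrace:
its entries are exactly the nonzero elements, and the cyclic consecutive differences
are pairwise distinct. -/
theorem graceful_gives_rotational_terrace (r : ℕ) (hr : 1 ≤ r) (α : ℕ → ℤ)
    (hα : IsGraceful r α)
    (a : ℕ → ZMod (2 * r + 1))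
    (ha : ∀ j < 2 * r, a j = if j < r then ((α j : ℤ) : ZMod (2 * r + 1))
      else ((α (2 * r - 1 - j) + r : ℤ) : ZMod (2 * r + 1))) :
    (Finset.range (2 * r)).image a = Finset.univ.erase (0 : ZMod (2 * r + 1)) ∧
    ∀ i < 2 * r, ∀ j < 2 * r,
      a ((i + 1) % (2 * r)) - a i = a ((j + 1) % (2 * r)) - a j → i = j :=
  graceful_gives_rotational_terrace_general r α hα a ha
end

section
/- For every r ≥ 1, the cyclic group Z_{2r+1} admits a rotational sequencing. -/
/-!
Represent `ZMod (2r+1)` by the balanced residues `-r, …, r`. Choose `x j = ±(j+1)` for `j < r`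
and arrange the nonzero residues as `x 0, …, x (r-1), -x 0, …, -x (r-1)`. The cyclic differences
of this arrangement again have the form `e 0, …, e (r-1), -e 0, …, -e (r-1)`, so both conditions
reduce to the classes `|e j|` being exactly `1, …, r`. With signs that alternate everywhere
except once, in the middle, the differences `x (j+1) - x j` are `±(2j+3)`, whose classes
`min (2j+3) (2r-2-2j)` are all values of `2, …, r` but one; the single non-alternation supplies
the class `1`, and the closing difference `-x 0 - x (r-1)` supplies the missing one.
-/

open Finset

theorem Finset.image_range_eq_univ_erase_of_injOn {α : Type*} [Fintype α] [DecidableEq α]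
    {f : ℕ → α} {m : ℕ} {x : α} (hm : Fintype.card α = m + 1) (hinj : Set.InjOn f (range m))
    (hx : ∀ j < m, f j ≠ x) : (range m).image f = univ.erase x := by
  refine eq_of_subset_of_card_le (fun y hy => ?_) ?_
  · obtain ⟨j, hj, rfl⟩ := mem_image.mp hy
    exact mem_erase.mpr ⟨hx j (mem_range.mp hj), mem_univ _⟩
  · rw [card_image_of_injOn hinj, card_erase_of_mem (mem_univ x), card_univ, hm, card_range]
    rfl

theorem ZMod.intCast_injOn_Icc (r : ℕ) :
    Set.InjOn (Int.cast : ℤ → ZMod (2 * r + 1)) (Set.Icc (-r) r) := by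
  intro u hu v hv h
  rw [ZMod.intCast_eq_intCast_iff_dvd_sub] at h
  have hlt : |v - u| < ((2 * r + 1 : ℕ) : ℤ) := by
    rw [abs_lt]; push_cast; constructor <;> linarith [hu.1, hu.2, hv.1, hv.2]
  linarith [Int.eq_zero_of_abs_lt_dvd h hlt]

def negExtend {G : Type*} [Neg G] (v : ℕ → G) (r j : ℕ) : G :=
  if j < r then v j else -v (j - r)

theorem map_negExtend {G H F : Type*} [AddGroup G] [AddGroup H] [FunLike F G H]
    [AddMonoidHomClass F G H] (f : F) (v : ℕ → G) (r j : ℕ) :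
    f (negExtend v r j) = negExtend (f ∘ v) r j := by
  unfold negExtend
  split_ifs <;> simp

theorem negExtend_succ_mod_sub {G : Type*} [AddCommGroup G] (v : ℕ → G) {r j : ℕ}
    (hj : j < 2 * r) :
    negExtend v r ((j + 1) % (2 * r)) - negExtend v r j =
      negExtend (fun i => negExtend v r (i + 1) - v i) r j := by
  rcases Nat.lt_or_ge j r with hjr | hjr
  · simp [negExtend, Nat.mod_eq_of_lt (show j + 1 < 2 * r by omega), hjr]
  rcases Nat.lt_or_ge (j + 1) (2 * r) with hj1 | hj1
  · simp only [negExtend, Nat.mod_eq_of_lt hj1, show ¬j < r by omega, show ¬j + 1 < r by omega,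
      show j + 1 - r = j - r + 1 by omega, show j - r + 1 < r by omega, if_true, if_false]
    abel
  · have hmod : (j + 1) % (2 * r) = 0 := by rw [show j + 1 = 2 * r by omega, Nat.mod_self]
    simp only [negExtend, hmod, show ¬j < r by omega, show 0 < r by omega,
      show j - r + 1 = r by omega, lt_irrefl, Nat.sub_self, if_true, if_false]
    abel

/-- `c 0, …, c (r-1)` pick one balanced representative from each pair `±x` of nonzero residues
modulo `2r+1`. -/
def IsHalfSystem (r : ℕ) (c : ℕ → ℤ) : Prop :=
  Set.MapsTo (fun j => (c j).natAbs) (range r) (Set.Icc 1 r) ∧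
    Set.InjOn (fun j => (c j).natAbs) (range r)

namespace IsHalfSystem

variable {r : ℕ} {c : ℕ → ℤ}

theorem natAbs_mem (h : IsHalfSystem r c) {j : ℕ} (hj : j < r) : (c j).natAbs ∈ Set.Icc 1 r :=
  h.1 (by simpa using hj)

theorem negExtend_injOn (h : IsHalfSystem r c) : Set.InjOn (negExtend c r) (range (2 * r)) := by
  intro i hi j hj hij
  simp only [coe_range, Set.mem_Iio] at hi hj
  have key : ∀ i < r, ∀ j < r, (c i).natAbs = (c j).natAbs → i = j := fun i hi j hj h' =>
    h.2 (by simpa using hi) (by simpa using hj) h'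
  have hne : ∀ j < r, c j ≠ 0 := fun j hj h0 => by simpa [h0] using (h.natAbs_mem hj).1
  unfold negExtend at hij
  split_ifs at hij with hir hjr hjr
  · exact key i hir j hjr (by rw [hij])
  · have hij' := key i hir (j - r) (by omega) (by rw [hij, Int.natAbs_neg])
    rw [← hij'] at hij
    exact absurd (by omega : c i = 0) (hne i hir)
  · have hij' := key (i - r) (by omega) j hjr (by rw [← hij, Int.natAbs_neg])
    rw [hij'] at hij
    exact absurd (by omega : c j = 0) (hne j hjr)
  · have := key (i - r) (by omega) (j - r) (by omega) (by rw [neg_inj.mp hij])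
    omega

theorem negExtend_mem_Icc (h : IsHalfSystem r c) {j : ℕ} (hj : j < 2 * r) :
    negExtend c r j ∈ Set.Icc (-(r : ℤ)) r \ {0} := by
  have := h.natAbs_mem (j := if j < r then j else j - r) (by split_ifs <;> omega)
  unfold negExtend
  simp only [Set.mem_sdiff, Set.mem_Icc, Set.mem_singleton_iff] at this ⊢
  split_ifs at this ⊢ <;> omega

theorem intCast_negExtend_injOn (h : IsHalfSystem r c) :
    Set.InjOn (fun j => ((negExtend c r j : ℤ) : ZMod (2 * r + 1))) (range (2 * r)) :=
  fun i hi j hj hij => h.negExtend_injOn hi hj <|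
    ZMod.intCast_injOn_Icc r (h.negExtend_mem_Icc (by simpa using hi)).1
      (h.negExtend_mem_Icc (by simpa using hj)).1 hij

theorem intCast_negExtend_ne_zero (h : IsHalfSystem r c) {j : ℕ} (hj : j < 2 * r) :
    ((negExtend c r j : ℤ) : ZMod (2 * r + 1)) ≠ 0 := fun h0 =>
  (h.negExtend_mem_Icc hj).2 <|
    ZMod.intCast_injOn_Icc r (h.negExtend_mem_Icc hj).1 (by simp) (by simpa using h0)

end IsHalfSystem

/-- The representative of `d` among `-r, …, r` modulo `2r+1`, provided `|d| ≤ 3r+1`. -/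
def balance (r : ℕ) (d : ℤ) : ℤ :=
  if (r : ℤ) < d then d - (2 * r + 1) else if d < -r then d + (2 * r + 1) else d

theorem intCast_balance (r : ℕ) (d : ℤ) : ((balance r d : ℤ) : ZMod (2 * r + 1)) = d := by
  have h : ((2 * r + 1 : ℤ) : ZMod (2 * r + 1)) = 0 := by exact_mod_cast ZMod.natCast_self _
  unfold balance
  split_ifs <;> simp [h]

/-- `±(j+1)`, with signs alternating except between positions `(r+1)/2 - 1` and `(r+1)/2`. -/
def signedRamp (r j : ℕ) : ℤ :=
  if (j % 2 = 0 ↔ j < (r + 1) / 2) then j + 1 else -(j + 1)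

theorem natAbs_signedRamp (r j : ℕ) : (signedRamp r j).natAbs = j + 1 := by
  unfold signedRamp
  split_ifs <;> omega

theorem isHalfSystem_signedRamp (r : ℕ) : IsHalfSystem r (signedRamp r) := by
  refine ⟨fun j hj => ?_, fun i _ j _ hij => ?_⟩
  · simp only [coe_range, Set.mem_Iio] at hj
    simp only [natAbs_signedRamp, Set.mem_Icc]
    omega
  · simpa [natAbs_signedRamp] using hij

def rampDiff (r j : ℕ) : ℤ :=
  balance r (negExtend (signedRamp r) r (j + 1) - signedRamp r j)

theorem natAbs_rampDiff {r j : ℕ} (hj : j < r) : (rampDiff r j).natAbs =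
    if j + 1 = (r + 1) / 2 then 1
    else if j + 1 = r then r - r % 2
    else min (2 * j + 3) (2 * r - 2 - 2 * j) := by
  unfold rampDiff balance negExtend signedRamp
  split_ifs <;> omega

theorem isHalfSystem_rampDiff (r : ℕ) : IsHalfSystem r (rampDiff r) := by
  refine ⟨fun j hj => ?_, fun i hi j hj hij => ?_⟩
  · simp only [coe_range, Set.mem_Iio] at hj
    simp only [natAbs_rampDiff hj, Set.mem_Icc]
    split_ifs <;> omega
  · simp only [coe_range, Set.mem_Iio] at hi hj
    simp only [natAbs_rampDiff hi, natAbs_rampDiff hj] at hij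
    split_ifs at hij <;> omega

theorem intCast_negExtend_signedRamp_sub {r j : ℕ} (hj : j < 2 * r) :
    ((negExtend (signedRamp r) r ((j + 1) % (2 * r)) : ℤ) : ZMod (2 * r + 1)) -
      ((negExtend (signedRamp r) r j : ℤ) : ZMod (2 * r + 1)) =
      ((negExtend (rampDiff r) r j : ℤ) : ZMod (2 * r + 1)) := by
  rw [← Int.cast_sub, negExtend_succ_mod_sub _ hj]
  simp only [← Int.coe_castAddHom, map_negExtend]
  congr 1
  funext i
  simp only [Function.comp_apply, Int.coe_castAddHom, rampDiff, intCast_balance]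

theorem exists_rotational_sequencing_general (r : ℕ) :
    ∃ a : ℕ → ZMod (2 * r + 1),
      (Finset.range (2 * r)).image a = Finset.univ.erase (0 : ZMod (2 * r + 1)) ∧
      ∀ i < 2 * r, ∀ j < 2 * r,
        a ((i + 1) % (2 * r)) - a i = a ((j + 1) % (2 * r)) - a j → i = j := by
  refine ⟨fun j => ((negExtend (signedRamp r) r j : ℤ) : ZMod (2 * r + 1)), ?_, ?_⟩
  · exact image_range_eq_univ_erase_of_injOn (ZMod.card _)
      (isHalfSystem_signedRamp r).intCast_negExtend_injOn
      (fun j hj => (isHalfSystem_signedRamp r).intCast_negExtend_ne_zero hj)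
  · intro i hi j hj h
    rw [intCast_negExtend_signedRamp_sub hi, intCast_negExtend_signedRamp_sub hj] at h
    exact (isHalfSystem_rampDiff r).intCast_negExtend_injOn (by simpa using hi)
      (by simpa using hj) h

/-- `Z_{2r+1}` admits a rotational sequencing: there is a cyclic arrangement
`(a 0, …, a (2r-1))` of the nonzero elements of `ZMod (2r+1)` whose cyclic consecutive
differences are pairwise distinct. -/
theorem exists_rotational_sequencing (r : ℕ) (hr : 1 ≤ r) :
    ∃ a : ℕ → ZMod (2 * r + 1),
      (Finset.range (2 * r)).image a = Finset.univ.erase (0 : ZMod (2 * r + 1)) ∧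
      ∀ i < 2 * r, ∀ j < 2 * r,
        a ((i + 1) % (2 * r)) - a i = a ((j + 1) % (2 * r)) - a j → i = j :=
  exists_rotational_sequencing_general r
end

section
/- Let n be odd and let x be any nonzero element of Z_n. Then the n-2 elements of Z_n \ {0, x} can be ordered (a_1, ..., a_{n-2}) so that the partial sums s_1, ..., s_{n-2} are pairwise distinct and all nonzero. -/
/-!
Let `v : Z_m → G` run cyclically through `m = |G| - 1` distinct points of `G` with distinct
steps `v (j + 1) - v j`; the steps are then exactly the nonzero elements of `G`. If
`x = v (j₀ + 1) - v j₀`, walking once around the cycle from `v (j₀ + 1)` uses every step except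
`x`, and its partial sums `v (j₀ + 1 + j) - v (j₀ + 1)` are distinct and nonzero because the
points are. For `G = Z_{2k+1}` a zigzag through the integers in `[-k, k]` is such a cycle.
-/

open Finset Function

lemma ZMod.eq_or_eq_add_of_intCast_eq {n : ℕ} {a b : ℤ} (h : (a : ZMod n) = b)
    (hab : |a - b| < 2 * n) : a = b ∨ a = b + n ∨ b = a + n := by
  obtain ⟨t, ht⟩ := (ZMod.intCast_eq_intCast_iff_dvd_sub _ _ _).mp h.symm
  rw [ht, abs_mul, Nat.abs_cast] at hab
  have ht2 : |t| < 2 := lt_of_mul_lt_mul_left (hab.trans_eq (mul_comm _ _)) (by positivity)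
  obtain ⟨ht₁, ht₂⟩ := abs_lt.mp ht2
  interval_cases t <;> omega

lemma ZMod.add_natCast_injOn_Iio {m : ℕ} [NeZero m] (r : ZMod m) :
    Set.InjOn (fun j : ℕ ↦ r + j) (Set.Iio m) := fun _ hp _ hq h ↦
  CharP.natCast_injOn_Iio (ZMod m) m hp hq (add_left_cancel h)

/-- When `Fintype.card G = m + 1`, the steps `v (j + 1) - v j` for `j = 0, …, m - 1`, preceded
by `0`, form an R-sequencing of `G`. -/
structure IsRSequencing {G : Type*} [AddCommGroup G] {m : ℕ} (v : ZMod m → G) : Prop where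
  injective : Injective v
  injective_step : Injective fun j ↦ v (j + 1) - v j

namespace IsRSequencing

variable {G : Type*} [AddCommGroup G] {m : ℕ} {v : ZMod m → G}

lemma step_ne_zero [Fact (1 < m)] (hv : IsRSequencing v) (j : ZMod m) : v (j + 1) - v j ≠ 0 :=
  sub_ne_zero.mpr (hv.injective.ne (by simp))

lemma exists_step_eq [Fintype G] [DecidableEq G] [Fact (1 < m)] (hv : IsRSequencing v)
    (hG : Fintype.card G = m + 1) {x : G} (hx : x ≠ 0) : ∃ j, v (j + 1) - v j = x := by
  have himage : univ.image (fun j ↦ v (j + 1) - v j) = univ.erase 0 := by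
    refine eq_of_subset_of_card_le (fun y hy ↦ ?_) ?_
    · obtain ⟨j, -, rfl⟩ := mem_image.mp hy
      exact mem_erase.mpr ⟨hv.step_ne_zero j, mem_univ _⟩
    · rw [card_image_of_injective _ hv.injective_step, card_erase_of_mem (mem_univ _),
        card_univ, card_univ, hG, ZMod.card]
      omega
  simpa using himage.ge (mem_erase.mpr ⟨hx, mem_univ x⟩)

theorem exists_ordering [Fintype G] [DecidableEq G] (hv : IsRSequencing v) (hm : 1 < m)
    (hG : Fintype.card G = m + 1) {x : G} (hx : x ≠ 0) :
    ∃ a : ℕ → G,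
      (range (m - 1)).image a = (univ.erase 0).erase x ∧
      (∀ j, 1 ≤ j → j ≤ m - 1 → ∑ i ∈ range j, a i ≠ 0) ∧
      (∀ j k, 1 ≤ j → j ≤ m - 1 → 1 ≤ k → k ≤ m - 1 →
        ∑ i ∈ range j, a i = ∑ i ∈ range k, a i → j = k) := by
  have : Fact (1 < m) := ⟨hm⟩
  obtain ⟨j₀, rfl⟩ := hv.exists_step_eq hG hx
  set r := j₀ + 1
  set a : ℕ → G := fun i ↦ v (r + (i + 1 : ℕ)) - v (r + i)
  have ha (i : ℕ) : a i = v (r + i + 1) - v (r + i) := by simp [a, add_assoc]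
  have hsum (j : ℕ) : ∑ i ∈ range j, a i = v (r + j) - v r :=
    (sum_range_sub (fun i : ℕ ↦ v (r + i)) j).trans (by simp)
  have hsum_injOn : Set.InjOn (fun j : ℕ ↦ ∑ i ∈ range j, a i) (Set.Iio m) :=
    fun p hp q hq h ↦ ZMod.add_natCast_injOn_Iio r hp hq <|
      hv.injective <| sub_left_inj.mp <| (hsum p).symm.trans (h.trans (hsum q))
  have ha_injOn : Set.InjOn a (range (m - 1)) := fun i hi i' hi' h ↦ by
    rw [ha, ha] at h
    exact ZMod.add_natCast_injOn_Iio r (by simp at hi ⊢; omega) (by simp at hi' ⊢; omega)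
      (hv.injective_step h)
  refine ⟨a, ?_, fun j hj₁ hj₂ h ↦ ?_, fun j k _ hj _ hk h ↦ ?_⟩
  · refine eq_of_subset_of_card_le (fun y hy ↦ ?_) ?_
    · obtain ⟨i, hi, rfl⟩ := mem_image.mp hy
      refine mem_erase.mpr ⟨fun h ↦ ?_, mem_erase.mpr ⟨?_, mem_univ _⟩⟩
      · rw [ha] at h
        have hj₀ : j₀ + 1 + i = j₀ := hv.injective_step h
        have := CharP.natCast_injOn_Iio (ZMod m) m (x₁ := i + 1) (x₂ := 0)
          (by simp at hi ⊢; omega) (by simp; omega) (by push_cast; linear_combination hj₀)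
        omega
      · rw [ha]
        exact hv.step_ne_zero _
    · rw [card_image_of_injOn ha_injOn,
        card_erase_of_mem (mem_erase.mpr ⟨hv.step_ne_zero j₀, mem_univ _⟩),
        card_erase_of_mem (mem_univ _), card_univ, hG, card_range]
      omega
  · have := hsum_injOn (show j < m by omega) (show 0 < m by omega) (by simpa using h)
    omega
  · exact hsum_injOn (show j < m by omega) (show k < m by omega) h

end IsRSequencing

/-- Odd positions carry `1, 2, …, k` and even positions `0, -1, …, -k` with `-⌈k/2⌉` skipped;
the skip is what makes the `2k` cyclic steps distinct modulo `2k + 1`. -/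
def zigzag (k j : ℕ) : ℤ :=
  if j % 2 = 1 then ((j + 1) / 2 : ℕ)
  else if j / 2 < (k + 1) / 2 then -(j / 2 : ℕ) else -(j / 2 : ℕ) - 1

def zigzagStep (k j : ℕ) : ℤ :=
  if j % 2 = 0 then (if j / 2 < (k + 1) / 2 then (j : ℤ) + 1 else (j : ℤ) + 2)
  else if j = 2 * k - 1 then -(k : ℤ)
  else if (j + 1) / 2 < (k + 1) / 2 then -(j : ℤ) - 1 else -(j : ℤ) - 2

lemma zigzag_succ_sub {k j : ℕ} (hj : j < 2 * k) :
    zigzag k ((j + 1) % (2 * k)) - zigzag k j = zigzagStep k j := by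
  rcases (by omega : j + 1 < 2 * k ∨ j + 1 = 2 * k) with h | h
  · rw [Nat.mod_eq_of_lt h]
    unfold zigzag zigzagStep
    split_ifs <;> omega
  · rw [h, Nat.mod_self]
    unfold zigzag zigzagStep
    split_ifs <;> omega

lemma zigzag_intCast_injOn (k : ℕ) :
    Set.InjOn (fun j ↦ (zigzag k j : ZMod (2 * k + 1))) (Set.Iio (2 * k)) := by
  intro p hp q hq h
  simp only [Set.mem_Iio] at hp hq
  have hbound : |zigzag k p - zigzag k q| < 2 * (2 * k + 1 : ℕ) := by
    unfold zigzag
    rw [abs_lt]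
    push_cast
    split_ifs <;> constructor <;> omega
  have := ZMod.eq_or_eq_add_of_intCast_eq h hbound
  unfold zigzag at this
  push_cast at this
  split_ifs at this <;> omega

lemma zigzagStep_intCast_injOn (k : ℕ) :
    Set.InjOn (fun j ↦ (zigzagStep k j : ZMod (2 * k + 1))) (Set.Iio (2 * k)) := by
  intro p hp q hq h
  simp only [Set.mem_Iio] at hp hq
  have hbound : |zigzagStep k p - zigzagStep k q| < 2 * (2 * k + 1 : ℕ) := by
    unfold zigzagStep
    rw [abs_lt]
    push_cast
    split_ifs <;> constructor <;> omega
  have := ZMod.eq_or_eq_add_of_intCast_eq h hbound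
  unfold zigzagStep at this
  push_cast at this
  split_ifs at this <;> omega

lemma isRSequencing_zigzag {k : ℕ} (hk : 0 < k) :
    IsRSequencing fun j : ZMod (2 * k) ↦ (zigzag k j.val : ZMod (2 * k + 1)) := by
  have : Fact (1 < 2 * k) := ⟨by omega⟩
  have hstep (j : ZMod (2 * k)) : (zigzag k (j + 1).val : ZMod (2 * k + 1)) - zigzag k j.val =
      zigzagStep k j.val := by
    rw [ZMod.val_add, ZMod.val_one, ← zigzag_succ_sub j.val_lt, Int.cast_sub]
  refine ⟨fun p q h ↦ ZMod.val_injective _ (zigzag_intCast_injOn k p.val_lt q.val_lt h),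
    fun p q h ↦ ?_⟩
  simp only [hstep] at h
  exact ZMod.val_injective _ (zigzagStep_intCast_injOn k p.val_lt q.val_lt h)

/-- For odd `n` and nonzero `x`, the elements of `Z_n \ {0, x}` can be ordered so that the
partial sums `s_1, …, s_{n-2}` are pairwise distinct and nonzero. -/
theorem order_remove_one (n : ℕ) [NeZero n] (hn : 3 ≤ n) (hodd : Odd n)
    (x : ZMod n) (hx : x ≠ 0) :
    ∃ a : ℕ → ZMod n,
      (Finset.range (n - 2)).image a = (Finset.univ.erase (0 : ZMod n)).erase x ∧
      (∀ j, 1 ≤ j → j ≤ n - 2 → ∑ i ∈ Finset.range j, a i ≠ 0) ∧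
      (∀ j k, 1 ≤ j → j ≤ n - 2 → 1 ≤ k → k ≤ n - 2 →
        ∑ i ∈ Finset.range j, a i = ∑ i ∈ Finset.range k, a i → j = k) := by
  obtain ⟨k, rfl⟩ := hodd
  rw [show 2 * k + 1 - 2 = 2 * k - 1 by omega]
  exact (isRSequencing_zigzag (by omega)).exists_ordering (by omega) (ZMod.card _) hx
end

section
/- Let n be odd and let x, y be distinct nonzero elements of Z_n. If Z_n has a rotational sequencing (b_1, ..., b_{n-1}) in which x and y occupy adjacent positions (cyclically), then the elements of Z_n \ {0, x, y} can be ordered so that all the partial sums s_1, ..., s_{n-3} are pairwise distinct and nonzero. -/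
/-!
Rotate the cyclic arrangement `a` so that the adjacent differences `x` and `y` become the last two
cyclic differences. The other `n - 3` differences are then the consecutive differences
`a_{k+1} - a_k` of a path through distinct elements, so their partial sums telescope to
`a_k - a_0`, which are distinct and nonzero.
-/

open Finset

section CyclicDiff

variable {G : Type*} [AddCommGroup G]

/-- The difference `b_{j+1}` of the paper, for the arrangement `a 0, …, a (m - 1)`. -/
def cyclicDiff (a : ℕ → G) (m j : ℕ) : G := a ((j + 1) % m) - a j

lemma cyclicDiff_of_succ_lt {a : ℕ → G} {m j : ℕ} (hj : j + 1 < m) :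
    cyclicDiff a m j = a (j + 1) - a j := by
  rw [cyclicDiff, Nat.mod_eq_of_lt hj]

lemma cyclicDiff_ne_zero {a : ℕ → G} {m j : ℕ} (ha : Set.InjOn a (Set.Iio m)) (hm : 2 ≤ m)
    (hj : j < m) : cyclicDiff a m j ≠ 0 := by
  have hsucc : (j + 1) % m ≠ j := by
    rcases Nat.lt_or_ge (j + 1) m with h | h
    · rw [Nat.mod_eq_of_lt h]; omega
    · rw [show j + 1 = m by omega, Nat.mod_self]; omega
  exact fun h => hsucc (ha (Nat.mod_lt _ (by omega)) hj (sub_eq_zero.1 h))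

lemma cyclicDiff_rotate (a : ℕ → G) (m s j : ℕ) :
    cyclicDiff (fun j => a ((s + j) % m)) m j = cyclicDiff a m ((s + j) % m) := by
  simp only [cyclicDiff, Nat.add_mod_mod, Nat.mod_add_mod, add_assoc]

lemma Set.InjOn.rotate {α : Type*} {a : ℕ → α} {m : ℕ} (ha : Set.InjOn a (Set.Iio m))
    (s : ℕ) :
    Set.InjOn (fun j => a ((s + j) % m)) (Set.Iio m) := by
  intro j hj k hk h
  have hm : 0 < m := by simp only [Set.mem_Iio] at hj; omega
  exact (Nat.ModEq.add_left_cancel' s (ha (Nat.mod_lt _ hm) (Nat.mod_lt _ hm) h)).eq_of_lt_of_lt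
    hj hk

lemma cyclicDiff_rotate_injOn {a : ℕ → G} {m : ℕ}
    (hd : Set.InjOn (cyclicDiff a m) (Set.Iio m)) (s : ℕ) :
    Set.InjOn (cyclicDiff (fun j => a ((s + j) % m)) m) (Set.Iio m) := by
  intro j hj k hk h
  exact hd.rotate s hj hk (by simpa only [cyclicDiff_rotate] using h)

/-- Starting the rotation at `i + 2` moves the differences at `i` and `i + 1` to the end. -/
lemma cyclicDiff_rotate_sub_two (a : ℕ → G) {m i : ℕ} (hm : 2 ≤ m) (hi : i < m) :
    cyclicDiff (fun j => a ((i + 2 + j) % m)) m (m - 2) = a ((i + 1) % m) - a i := by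
  rw [cyclicDiff_rotate, show i + 2 + (m - 2) = i + m by omega, Nat.add_mod_right,
    Nat.mod_eq_of_lt hi, cyclicDiff]

lemma cyclicDiff_rotate_sub_one (a : ℕ → G) {m i : ℕ} (hm : 2 ≤ m) :
    cyclicDiff (fun j => a ((i + 2 + j) % m)) m (m - 1) = a ((i + 2) % m) - a ((i + 1) % m) := by
  rw [cyclicDiff_rotate, show i + 2 + (m - 1) = i + 1 + m by omega, Nat.add_mod_right,
    cyclicDiff, Nat.mod_add_mod]

theorem exists_ordering_of_cyclicDiff_injOn [Fintype G] [DecidableEq G] {m : ℕ} (hm : 2 ≤ m)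
    (hG : Fintype.card G = m + 1) {b : ℕ → G} (hb : Set.InjOn b (Set.Iio m))
    (hd : Set.InjOn (cyclicDiff b m) (Set.Iio m)) :
    ∃ c : ℕ → G,
      (range (m - 2)).image c =
        ((univ.erase 0).erase (cyclicDiff b m (m - 2))).erase (cyclicDiff b m (m - 1)) ∧
      (∀ j, 1 ≤ j → j ≤ m - 2 → ∑ i ∈ range j, c i ≠ 0) ∧
      (∀ j k, 1 ≤ j → j ≤ m - 2 → 1 ≤ k → k ≤ m - 2 →
        ∑ i ∈ range j, c i = ∑ i ∈ range k, c i → j = k) := by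
  set c : ℕ → G := fun j => b (j + 1) - b j
  have hc : ∀ j < m - 2, c j = cyclicDiff b m j := fun j hj =>
    (cyclicDiff_of_succ_lt (by omega)).symm
  have hpartial : ∀ k, ∑ i ∈ range k, c i = b k - b 0 := sum_range_sub b
  have hcard : (((univ.erase 0).erase (cyclicDiff b m (m - 2))).erase
      (cyclicDiff b m (m - 1))).card = m - 2 := by
    have hne : cyclicDiff b m (m - 1) ≠ cyclicDiff b m (m - 2) :=
      fun h => absurd (hd (by simp; omega) (by simp; omega) h) (by omega)
    rw [card_erase_of_mem (by simp [hne, cyclicDiff_ne_zero hb hm (show m - 1 < m by omega)]),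
      card_erase_of_mem (by simp [cyclicDiff_ne_zero hb hm (show m - 2 < m by omega)]),
      card_erase_of_mem (mem_univ _), card_univ, hG]
    omega
  have hmaps : ∀ j < m - 2, c j ∈
      ((univ.erase 0).erase (cyclicDiff b m (m - 2))).erase (cyclicDiff b m (m - 1)) := by
    intro j hj
    have hdj : ∀ k < m, k ≠ j → c j ≠ cyclicDiff b m k := fun k hk hkj h =>
      hkj (hd (show k < m from hk) (show j < m by omega) (h.symm.trans (hc j hj)))
    simp only [mem_erase, mem_univ, and_true]
    exact ⟨hdj _ (by omega) (by omega), hdj _ (by omega) (by omega),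
      hc j hj ▸ cyclicDiff_ne_zero hb hm (by omega)⟩
  have hcinj : Set.InjOn c (range (m - 2)) := fun j hj k hk h => by
    simp only [coe_range, Set.mem_Iio] at hj hk
    exact hd (show j < m by omega) (show k < m by omega) (by rw [← hc j hj, ← hc k hk, h])
  refine ⟨c, eq_of_subset_of_card_le (image_subset_iff.2 fun j hj => hmaps j (mem_range.1 hj))
    (by rw [hcard, card_image_of_injOn hcinj, card_range]), ?_, ?_⟩
  · intro j hj1 hj2 h
    rw [hpartial, sub_eq_zero] at h
    exact absurd (hb (show j < m by omega) (show 0 < m by omega) h) (by omega)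
  · intro j k _ hj2 _ hk2 h
    rw [hpartial, hpartial, sub_left_inj] at h
    exact hb (show j < m by omega) (show k < m by omega) h

end CyclicDiff

theorem order_remove_two_of_adjacent_general (n : ℕ) [NeZero n] (hn : 3 ≤ n)
    (x y : ZMod n)
    (hseq : ∃ a : ℕ → ZMod n,
      (Finset.range (n - 1)).image a = Finset.univ.erase (0 : ZMod n) ∧
      (∀ i < n - 1, ∀ j < n - 1,
        a ((i + 1) % (n - 1)) - a i = a ((j + 1) % (n - 1)) - a j → i = j) ∧
      (∃ i < n - 1,
        (a ((i + 1) % (n - 1)) - a i = x ∧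
          a ((i + 2) % (n - 1)) - a ((i + 1) % (n - 1)) = y) ∨
        (a ((i + 1) % (n - 1)) - a i = y ∧
          a ((i + 2) % (n - 1)) - a ((i + 1) % (n - 1)) = x))) :
    ∃ c : ℕ → ZMod n,
      (Finset.range (n - 3)).image c = ((Finset.univ.erase (0 : ZMod n)).erase x).erase y ∧
      (∀ j, 1 ≤ j → j ≤ n - 3 → ∑ i ∈ Finset.range j, c i ≠ 0) ∧
      (∀ j k, 1 ≤ j → j ≤ n - 3 → 1 ≤ k → k ≤ n - 3 →
        ∑ i ∈ Finset.range j, c i = ∑ i ∈ Finset.range k, c i → j = k) := by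
  obtain ⟨a, himage, hdiff, i, hi, hadj⟩ := hseq
  have ha : Set.InjOn a (Set.Iio (n - 1)) := by
    rw [← coe_range, ← card_image_iff, himage, card_erase_of_mem (mem_univ _), card_univ,
      ZMod.card, card_range]
  obtain ⟨c, hc⟩ := exists_ordering_of_cyclicDiff_injOn (by omega)
    (by rw [ZMod.card]; omega) (ha.rotate (i + 2)) (cyclicDiff_rotate_injOn hdiff (i + 2))
  rw [cyclicDiff_rotate_sub_two a (by omega) hi, cyclicDiff_rotate_sub_one a (by omega)] at hc
  rw [show n - 3 = n - 1 - 2 by omega]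
  rcases hadj with ⟨hx, hy⟩ | ⟨hy, hx⟩
  · exact ⟨c, by rw [← hx, ← hy]; exact hc⟩
  · exact ⟨c, by rw [erase_right_comm, ← hx, ← hy]; exact hc⟩

/-- If `Z_n` (`n` odd) has a rotational sequencing in which distinct nonzero `x` and `y`
occupy cyclically adjacent positions, then `Z_n \ {0, x, y}` can be ordered so that the
partial sums `s_1, …, s_{n-3}` are pairwise distinct and nonzero. -/
theorem order_remove_two_of_adjacent (n : ℕ) [NeZero n] (hn : 3 ≤ n) (hodd : Odd n)
    (x y : ZMod n) (hx : x ≠ 0) (hy : y ≠ 0) (hxy : x ≠ y)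
    (hseq : ∃ a : ℕ → ZMod n,
      (Finset.range (n - 1)).image a = Finset.univ.erase (0 : ZMod n) ∧
      (∀ i < n - 1, ∀ j < n - 1,
        a ((i + 1) % (n - 1)) - a i = a ((j + 1) % (n - 1)) - a j → i = j) ∧
      (∃ i < n - 1,
        (a ((i + 1) % (n - 1)) - a i = x ∧
          a ((i + 2) % (n - 1)) - a ((i + 1) % (n - 1)) = y) ∨
        (a ((i + 1) % (n - 1)) - a i = y ∧
          a ((i + 2) % (n - 1)) - a ((i + 1) % (n - 1)) = x))) :
    ∃ c : ℕ → ZMod n,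
      (Finset.range (n - 3)).image c = ((Finset.univ.erase (0 : ZMod n)).erase x).erase y ∧
      (∀ j, 1 ≤ j → j ≤ n - 3 → ∑ i ∈ Finset.range j, c i ≠ 0) ∧
      (∀ j k, 1 ≤ j → j ≤ n - 3 → 1 ≤ k → k ≤ n - 3 →
        ∑ i ∈ Finset.range j, c i = ∑ i ∈ Finset.range k, c i → j = k) :=
  order_remove_two_of_adjacent_general n hn x y hseq
end

section
/- For every k ≥ 2, the coefficient of the monomial x_1^0 x_2^2 x_3^4 ⋯ x_k^{2k-2} (i.e., x_i has exponent 2(i-1)) in the polynomial g_k(x_1, ..., x_k) = ∏_{1 ≤ i < j ≤ k} (x_j - x_i)(x_i + ... + x_j) over the integers equals 1. -/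
/-!
Order monomials lexicographically, with later variables more significant. Then
`x_j - x_i` and `x_i + ⋯ + x_j` both have leading term `x_j`, so each factor of `g_k` is monic
with leading monomial `x_j²`. Hence `g_k` is monic with leading monomial
`∏_{i<j} x_j² = ∏_j x_j^{2(j-1)}`, and the coefficient of that monomial is `1`.
-/

open MvPolynomial

/-- `g_k = ∏_{1 ≤ i < j ≤ k} (x_j - x_i)(x_i + ⋯ + x_j)` (0-indexed variables). -/
noncomputable def gPoly (k : ℕ) : MvPolynomial (Fin k) ℤ :=
  ∏ q ∈ Finset.univ.filter (fun q : Fin k × Fin k => q.1 < q.2),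
    ((X q.2 - X q.1) * ∑ l ∈ Finset.Icc q.1 q.2, X l)

open Finsupp
open scoped MonomialOrder

namespace MonomialOrder

variable {σ R : Type*} [CommRing R] {m : MonomialOrder σ}

theorem Monic.isRegular_leadingCoeff {f : MvPolynomial σ R} (hf : m.Monic f) :
    IsRegular (m.leadingCoeff f) :=
  hf.leadingCoeff_eq_one ▸ isRegular_one

theorem degree_sum_X_lt {s : Finset σ} {j : σ} (h : ∀ l ∈ s, single l 1 ≺[m] single j 1) :
    m.degree (∑ l ∈ s, (X l : MvPolynomial σ R)) ≺[m] single j 1 := by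
  refine m.degree_sum_le.trans_lt ((Finset.sup_lt_iff ?_).2 fun l hl => ?_)
  · exact bot_lt_iff_ne_bot.2 <| by simp
  · exact m.degree_X_le_single.trans_lt (h l hl)

variable [Nontrivial R]

theorem monic_X_sub_X {i j : σ} (h : single i 1 ≺[m] single j 1) :
    m.Monic (X j - X i : MvPolynomial σ R) := by
  rw [sub_eq_add_neg]
  refine m.monic_X.add_of_lt ?_
  rwa [degree_neg, degree_X, degree_X]

theorem degree_X_sub_X {i j : σ} (h : single i 1 ≺[m] single j 1) :
    m.degree (X j - X i : MvPolynomial σ R) = single j 1 := by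
  rw [m.degree_sub_of_lt, degree_X]
  rwa [degree_X, degree_X]

section LinearOrder

variable [LinearOrder σ] [LocallyFiniteOrder σ]

theorem degree_sum_Ico_X_lt (hm : StrictMono fun a : σ => m.toSyn (single a 1)) {i j : σ} :
    m.degree (∑ l ∈ Finset.Ico i j, (X l : MvPolynomial σ R)) ≺[m]
      m.degree (X j : MvPolynomial σ R) := by
  rw [degree_X]
  exact degree_sum_X_lt fun l hl => hm (Finset.mem_Ico.1 hl).2

theorem monic_sum_Icc_X (hm : StrictMono fun a : σ => m.toSyn (single a 1)) {i j : σ}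
    (hij : i ≤ j) : m.Monic (∑ l ∈ Finset.Icc i j, (X l : MvPolynomial σ R)) := by
  rw [← Finset.Ico_insert_right hij, Finset.sum_insert Finset.right_notMem_Ico]
  exact m.monic_X.add_of_lt (degree_sum_Ico_X_lt hm)

theorem degree_sum_Icc_X (hm : StrictMono fun a : σ => m.toSyn (single a 1)) {i j : σ}
    (hij : i ≤ j) : m.degree (∑ l ∈ Finset.Icc i j, (X l : MvPolynomial σ R)) = single j 1 := by
  rw [← Finset.Ico_insert_right hij, Finset.sum_insert Finset.right_notMem_Ico,
    m.degree_add_of_lt (degree_sum_Ico_X_lt hm), degree_X]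

theorem monic_X_sub_X_mul_sum_Icc_X (hm : StrictMono fun a : σ => m.toSyn (single a 1))
    {i j : σ} (hij : i < j) :
    m.Monic ((X j - X i) * ∑ l ∈ Finset.Icc i j, (X l : MvPolynomial σ R)) :=
  (monic_X_sub_X (hm hij)).mul (monic_sum_Icc_X hm hij.le)

theorem degree_X_sub_X_mul_sum_Icc_X (hm : StrictMono fun a : σ => m.toSyn (single a 1))
    {i j : σ} (hij : i < j) :
    m.degree ((X j - X i) * ∑ l ∈ Finset.Icc i j, (X l : MvPolynomial σ R)) = single j 2 := by
  rw [m.degree_mul_of_isRegular_left (monic_X_sub_X (hm hij)).isRegular_leadingCoeff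
      (monic_sum_Icc_X hm hij.le).ne_zero, degree_X_sub_X (hm hij), degree_sum_Icc_X hm hij.le,
    ← single_add]

end LinearOrder

/-- The lexicographic order in which larger variables are more significant. -/
noncomputable def lexDual [LinearOrder σ] [WellFoundedLT σ] : MonomialOrder σ :=
  MonomialOrder.lex (σ := σᵒᵈ)

theorem strictMono_lexDual_single [LinearOrder σ] [WellFoundedLT σ] :
    StrictMono fun a : σ => (lexDual : MonomialOrder σ).toSyn (single a 1) :=
  fun _ _ h => Finsupp.Lex.single_lt_iff.2 (OrderDual.toDual_lt_toDual.2 h)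

end MonomialOrder

theorem sum_single_snd_filter_lt (k c : ℕ) :
    ∑ q ∈ Finset.univ.filter (fun q : Fin k × Fin k => q.1 < q.2), single q.2 c =
      Finsupp.equivFunOnFinite.symm fun j : Fin k => c * (j : ℕ) := by
  ext j
  simp only [coe_equivFunOnFinite_symm, finsetSum_apply, single_apply]
  rw [Finset.sum_ite, Finset.sum_const_zero, add_zero, Finset.sum_const, smul_eq_mul, mul_comm]
  have hfiber : ((Finset.univ.filter fun q : Fin k × Fin k => q.1 < q.2).filter fun q => q.2 = j) =
      (Finset.Iio j).map (Function.Embedding.sectL (Fin k) j) := by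
    ext ⟨a, b⟩
    simp only [Finset.mem_filter, Finset.mem_univ, true_and, Finset.mem_map, Finset.mem_Iio,
      Function.Embedding.sectL_apply, Prod.mk.injEq]
    grind
  rw [hfiber, Finset.card_map, Fin.card_Iio]

open MonomialOrder

/-- The exponent of the 0-indexed variable `i` is `2i`, i.e. `2(i-1)` on the paper's `x_i`. -/
theorem gPoly_coeff_general (k : ℕ) :
    MvPolynomial.coeff (Finsupp.equivFunOnFinite.symm fun i : Fin k => 2 * (i : ℕ))
      (gPoly k) = 1 := by
  have hm := strictMono_lexDual_single (σ := Fin k)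
  have hfactor_monic : ∀ q ∈ Finset.univ.filter (fun q : Fin k × Fin k => q.1 < q.2),
      lexDual.Monic ((X q.2 - X q.1) * ∑ l ∈ Finset.Icc q.1 q.2, (X l : MvPolynomial _ ℤ)) :=
    fun q hq => monic_X_sub_X_mul_sum_Icc_X hm (Finset.mem_filter.1 hq).2
  have hdegree : lexDual.degree (gPoly k) =
      Finsupp.equivFunOnFinite.symm fun i : Fin k => 2 * (i : ℕ) := by
    rw [gPoly, degree_prod_of_regular fun q hq => (hfactor_monic q hq).isRegular_leadingCoeff,
      ← sum_single_snd_filter_lt]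
    exact Finset.sum_congr rfl fun q hq =>
      degree_X_sub_X_mul_sum_Icc_X hm (Finset.mem_filter.1 hq).2
  rw [← hdegree]
  exact (Monic.prod hfactor_monic).coeff_degree

/-- The coefficient of `x_1^0 x_2^2 ⋯ x_k^{2k-2}` (exponent `2(i-1)` on the `i`-th variable,
so `2i` on the 0-indexed variable `i`) in `g_k` equals `1`. -/
theorem gPoly_coeff (k : ℕ) (hk : 2 ≤ k) :
    MvPolynomial.coeff (Finsupp.equivFunOnFinite.symm fun i : Fin k => 2 * (i : ℕ))
      (gPoly k) = 1 :=
  gPoly_coeff_general k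
end

section
/- Let n be a positive integer and p_1 its smallest prime divisor. If A ⊆ Z_n is a set such that no difference of two distinct elements of A is a zero-divisor in Z_n, then |A| ≤ p_1. Moreover, the set {1, 2, ..., p_1} ⊆ Z_n attains this bound: no two of its distinct elements differ by a zero-divisor. -/
/-!
In the finite ring `ZMod n` a nonzero element is a zero-divisor exactly when it is not a unit.
Units stay units under reduction modulo the smallest prime `p₁ ∣ n`, so a set whose differences
are units injects into `ZMod p₁`. Conversely, for `1 ≤ a, b ≤ p₁` the difference satisfies
`0 < |a - b| < p₁`, hence is coprime to `n`.
-/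

def IsZeroDiv (n : ℕ) (z : ZMod n) : Prop :=
  z ≠ 0 ∧ ∃ w : ZMod n, w ≠ 0 ∧ z * w = 0

lemma isZeroDiv_iff {n : ℕ} [NeZero n] {z : ZMod n} : IsZeroDiv n z ↔ z ≠ 0 ∧ ¬IsUnit z := by
  rw [IsArtinianRing.isUnit_iff_mem_nonZeroDivisors, notMem_nonZeroDivisors_iff_right]
  simp only [IsZeroDiv, Set.Nonempty, Set.mem_ofPred_eq, mul_comm _ z, and_comm]

lemma RingHom.injOn_of_pairwise_isUnit_sub {R S : Type*} [Ring R] [Ring S] [Nontrivial S]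
    (f : R →+* S) {s : Set R} (hs : s.Pairwise fun a b => IsUnit (a - b)) : Set.InjOn f s := by
  intro a ha b hb hfab
  by_contra hab
  simpa [hfab] using (hs ha hb hab).map f

lemma ZMod.card_le_of_pairwise_isUnit_sub {n p : ℕ} (hp : p.Prime) (hpn : p ∣ n)
    {A : Finset (ZMod n)} (hA : (A : Set (ZMod n)).Pairwise fun a b => IsUnit (a - b)) :
    A.card ≤ p := by
  have := Fact.mk hp
  simpa using Finset.card_le_card_of_injOn _ (fun _ _ => Finset.mem_univ _)
    ((ZMod.castHom hpn (ZMod p)).injOn_of_pairwise_isUnit_sub hA)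

lemma ZMod.isUnit_natCast_of_lt_minFac {n m : ℕ} (h₀ : m ≠ 0) (h : m < n.minFac) :
    IsUnit (m : ZMod n) :=
  (ZMod.isUnit_iff_coprime m n).2 (Nat.coprime_of_lt_minFac h₀ h).symm

lemma ZMod.isUnit_natCast_sub_natCast {n a b : ℕ} (hba : b < a) (hab : a < b + n.minFac) :
    IsUnit ((a : ZMod n) - b) := by
  rw [← Nat.cast_sub hba.le]
  exact ZMod.isUnit_natCast_of_lt_minFac (by omega) (by omega)

lemma ZMod.isUnit_natCast_sub_natCast_of_mem_Icc {n a b : ℕ} (ha : a ∈ Finset.Icc 1 n.minFac)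
    (hb : b ∈ Finset.Icc 1 n.minFac) (hab : a ≠ b) : IsUnit ((a : ZMod n) - b) := by
  rw [Finset.mem_Icc] at ha hb
  rcases hab.lt_or_gt with h | h
  · simpa using (ZMod.isUnit_natCast_sub_natCast (n := n) h (by omega)).neg
  · exact ZMod.isUnit_natCast_sub_natCast h (by omega)

/-- If no two distinct elements of `A ⊆ Z_n` differ by a zero-divisor then `|A| ≤ p₁`, the
smallest prime divisor of `n`; moreover `{1, …, p₁}` attains this bound. -/
theorem card_le_minFac_of_no_zero_divisor_differences (n : ℕ) (hn : 2 ≤ n) :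
    (∀ A : Finset (ZMod n),
      (∀ a ∈ A, ∀ b ∈ A, a ≠ b → ¬ IsZeroDiv n (a - b)) → A.card ≤ n.minFac) ∧
    (∀ a ∈ Finset.Icc 1 n.minFac, ∀ b ∈ Finset.Icc 1 n.minFac, a ≠ b →
      ¬ IsZeroDiv n ((a : ZMod n) - (b : ZMod n))) := by
  have : NeZero n := ⟨by omega⟩
  refine ⟨fun A hA => ?_, fun a ha b hb hab h => ?_⟩
  · refine ZMod.card_le_of_pairwise_isUnit_sub (Nat.minFac_prime (by omega)) n.minFac_dvd ?_
    intro a ha b hb hab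
    simpa [isZeroDiv_iff, sub_ne_zero.2 hab] using hA a ha b hb hab
  · exact (isZeroDiv_iff.1 h).2 (ZMod.isUnit_natCast_sub_natCast_of_mem_Icc ha hb hab)
end

section
/- Let d ≥ 1 and r > d, with (d, r) not in {(2,4), (2,5), (2,8)} and r = 3d. Then the sequence (d+1; 1, 3d, 2, 3d-1, 3, 3d-2, ..., d, 2d+1; d+2, 2d, d+3, 2d-1, ..., ⌈(3d+1)/2⌉) is a graceful permutation of length r = 3d whose sequence of absolute differences is (d; 3d-1, 3d-2, ..., d+1; d-1, d-2, ..., 1), and in particular begins with d. -/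
/-- The sequence `(d+1; 1, 3d, 2, 3d-1, …, d, 2d+1; d+2, 2d, d+3, 2d-1, …)` (0-indexed). -/
def threeDSeq (d : ℕ) : ℕ → ℤ := fun j =>
  if j = 0 then (d : ℤ) + 1
  else if j ≤ 2 * d then
    (if j % 2 = 1 then (((j + 1) / 2 : ℕ) : ℤ) else 3 * (d : ℤ) + 1 - ((j / 2 : ℕ) : ℤ))
  else
    (if (j - 2 * d) % 2 = 1 then (d : ℤ) + 1 + (((j - 2 * d + 1) / 2 : ℕ) : ℤ)
     else 2 * (d : ℤ) + 1 - (((j - 2 * d) / 2 : ℕ) : ℤ))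

/-!
After the initial step of size `d`, the sequence zigzags inwards between the two ends of
`1, …, 3d` until it reaches `2d + 1`, then inwards between the two ends of `d + 2, …, 2d + 1`.
Each zigzag move is one shorter than the previous one, so the first zigzag realises the
differences `3d - 1, …, d + 1` and the second `d - 1, …, 1`.
-/

theorem IsGraceful.of_abs_sub_eq {r : ℕ} {α : ℕ → ℤ} {g : ℕ → ℤ}
    (himage : (Finset.range r).image α = Finset.Icc 1 (r : ℤ))
    (hgap : ∀ i, i + 1 < r → |α (i + 1) - α i| = g i) (hg : Function.Injective g) :
    IsGraceful r α :=
  ⟨himage, fun i j hi hj h => hg (by rwa [hgap i hi, hgap j hj] at h)⟩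

def threeDSeqGap (d i : ℕ) : ℤ :=
  if i = 0 then (d : ℤ) else if i < 2 * d then 3 * (d : ℤ) - i else 3 * (d : ℤ) - 1 - i

theorem threeDSeqGap_injective (d : ℕ) : Function.Injective (threeDSeqGap d) := by
  intro i j h
  simp only [threeDSeqGap] at h
  split_ifs at h <;> omega

theorem abs_threeDSeq_succ_sub {d i : ℕ} (hi : i + 1 < 3 * d) :
    |threeDSeq d (i + 1) - threeDSeq d i| = threeDSeqGap d i := by
  have hgap : 0 ≤ threeDSeqGap d i := by
    simp only [threeDSeqGap]
    split_ifs <;> omega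
  rw [abs_eq hgap]
  simp only [threeDSeq, threeDSeqGap]
  -- `split_ifs` refutes some inconsistent branches to a hypothesis `False`, which `omega` ignores
  split_ifs <;> first | contradiction | omega

theorem threeDSeq_mem_Icc {d j : ℕ} (hj : j < 3 * d) :
    threeDSeq d j ∈ Finset.Icc 1 (3 * d : ℤ) := by
  rw [Finset.mem_Icc]
  simp only [threeDSeq]
  split_ifs <;> constructor <;> omega

theorem exists_threeDSeq_eq {d : ℕ} {v : ℤ} (hv : v ∈ Finset.Icc 1 (3 * d : ℤ)) :
    ∃ j < 3 * d, threeDSeq d j = v := by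
  rw [Finset.mem_Icc] at hv
  lift v to ℕ using by omega
  have hv1 : 1 ≤ v := by exact_mod_cast hv.1
  have hv2 : v ≤ 3 * d := by exact_mod_cast hv.2
  -- small values sit at odd places of the first zigzag, large ones at its even places or at even
  -- places of the second zigzag, and the middle ones at odd places of the second zigzag
  by_cases hsmall : v ≤ d
  · exact ⟨2 * v - 1, by omega, by simp only [threeDSeq]; split_ifs <;> omega⟩
  by_cases hstart : v = d + 1
  · exact ⟨0, by omega, by simp only [threeDSeq]; split_ifs <;> omega⟩
  by_cases hmiddle : v ≤ 2 * d ∧ 2 * v ≤ 3 * d + 2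
  · exact ⟨2 * v - 3, by omega, by simp only [threeDSeq]; split_ifs <;> omega⟩
  · exact ⟨6 * d + 2 - 2 * v, by omega, by simp only [threeDSeq]; split_ifs <;> omega⟩

theorem image_range_threeDSeq (d : ℕ) :
    (Finset.range (3 * d)).image (threeDSeq d) = Finset.Icc 1 ((3 * d : ℕ) : ℤ) := by
  ext v
  simp only [Finset.mem_image, Finset.mem_range, Nat.cast_mul, Nat.cast_ofNat]
  exact ⟨fun ⟨j, hj, hjv⟩ => hjv ▸ threeDSeq_mem_Icc hj, exists_threeDSeq_eq⟩

theorem threeDSeq_graceful_general (d r : ℕ) (hr3 : r = 3 * d) :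
    IsGraceful r (threeDSeq d) ∧
    ∀ i, i + 1 < r →
      |threeDSeq d (i + 1) - threeDSeq d i| =
        (if i = 0 then (d : ℤ) else if i < 2 * d then 3 * (d : ℤ) - i
         else 3 * (d : ℤ) - 1 - i) := by
  subst hr3
  exact ⟨.of_abs_sub_eq (image_range_threeDSeq d) (fun _ => abs_threeDSeq_succ_sub)
    (threeDSeqGap_injective d), fun _ => abs_threeDSeq_succ_sub⟩

/-- For `r = 3d` the sequence `threeDSeq d` is a graceful permutation of length `3d` whose
absolute differences are `(d; 3d-1, 3d-2, …, d+1; d-1, d-2, …, 1)`; in particular the first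
absolute difference is `d`. -/
theorem threeDSeq_graceful (d r : ℕ) (hd : 1 ≤ d) (hr : d < r) (hr3 : r = 3 * d)
    (hexc : (d, r) ∉ ({(2, 4), (2, 5), (2, 8)} : Set (ℕ × ℕ))) :
    IsGraceful r (threeDSeq d) ∧
    ∀ i, i + 1 < r →
      |threeDSeq d (i + 1) - threeDSeq d i| =
        (if i = 0 then (d : ℤ) else if i < 2 * d then 3 * (d : ℤ) - i
         else 3 * (d : ℤ) - 1 - i) :=
  threeDSeq_graceful_general d r hr3
end

section
/- There is no graceful permutation (α_1, ..., α_r) of length r whose first absolute difference |α_2 - α_1| equals 2, for r ∈ {4, 5, 8}. -/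
-- `1 + n` rather than `n + 1` so that this matches `Int.Icc_eq_finset_map` up to `rfl`.
def gracefulValues (r : ℕ) : List ℤ := (List.range r).map fun n : ℕ => 1 + (n : ℤ)

theorem coe_gracefulValues (r : ℕ) :
    (gracefulValues r : Multiset ℤ) = (Finset.Icc (1 : ℤ) r).val := by
  rw [Int.Icc_eq_finset_map, Finset.map_val, Finset.range_val, add_sub_cancel_right,
    Int.toNat_natCast, Multiset.range, Multiset.map_coe]
  rfl

theorem IsGraceful.perm_gracefulValues {r : ℕ} {α : ℕ → ℤ} (hα : IsGraceful r α) :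
    ((List.range r).map α).Perm (gracefulValues r) := by
  have hinj : Set.InjOn α (Finset.range r) := by
    rw [← Finset.card_image_iff, hα.1, Finset.card_range, Int.card_Icc]
    omega
  rw [← Multiset.coe_eq_coe, coe_gracefulValues, ← hα.1, Finset.image_val_of_injOn hinj]
  rfl

def HasFreshSteps : ℤ → List ℤ → List ℤ → Prop
  | _, _, [] => True
  | last, used, x :: l => |x - last| ∉ used ∧ HasFreshSteps x (|x - last| :: used) l

theorem IsGraceful.hasFreshSteps {r : ℕ} {α : ℕ → ℤ} (hα : IsGraceful r α) (n k : ℕ)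
    (hr : k + n + 1 = r) (used : List ℤ) (hused : ∀ s ∈ used, ∃ i < k, s = |α (i + 1) - α i|) :
    HasFreshSteps (α k) used ((List.range' (k + 1) n).map α) := by
  induction n generalizing k used with
  | zero => trivial
  | succ n ih =>
    rw [List.range'_succ, List.map_cons]
    refine ⟨fun hmem => ?_, ih (k + 1) (by omega) _ fun s hs => ?_⟩
    · obtain ⟨i, hik, hi⟩ := hused _ hmem
      have := hα.2 i k (by omega) (by omega) hi.symm
      omega
    · rcases List.mem_cons.mp hs with rfl | hs
      · exact ⟨k, k.lt_succ_self, rfl⟩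
      · obtain ⟨i, hik, hi⟩ := hused s hs
        exact ⟨i, by omega, hi⟩

/-- Depth-first search for an arrangement `l` of `rem` with `HasFreshSteps last used l`; the fuel
`n` is `rem.length`, which makes the recursion structural. -/
def canComplete : ℕ → ℤ → List ℤ → List ℤ → Bool
  | 0, _, _, rem => rem.isEmpty
  | n + 1, last, used, rem => rem.any fun x =>
      decide (|x - last| ∉ used) && canComplete n x (|x - last| :: used) (rem.erase x)

theorem canComplete_of_perm {l rem : List ℤ} (hl : l.Perm rem) {last : ℤ} {used : List ℤ}
    (h : HasFreshSteps last used l) : canComplete rem.length last used rem = true := by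
  induction l generalizing rem last used with
  | nil => rw [hl.symm.eq_nil]; rfl
  | cons x l ih =>
    obtain ⟨hx, hl'⟩ := h
    have hrem : (rem.erase x).Perm l := by simpa using (hl.erase x).symm
    rw [← hl.length_eq, List.length_cons, ← hrem.length_eq, canComplete, List.any_eq_true]
    exact ⟨x, hl.mem_iff.mp List.mem_cons_self, by simpa [hx] using ih hrem.symm hl'⟩

def gracefulSearch (r : ℕ) (d : ℤ) : Bool :=
  (gracefulValues r).any fun a => ((gracefulValues r).erase a).any fun b =>
    decide (|b - a| = d) && canComplete (r - 2) b [d] (((gracefulValues r).erase a).erase b)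

theorem IsGraceful.gracefulSearch_eq_true {r : ℕ} {α : ℕ → ℤ} (hα : IsGraceful r α) (hr : 2 ≤ r) :
    gracefulSearch r |α 1 - α 0| = true := by
  obtain ⟨m, rfl⟩ := Nat.exists_eq_add_of_le' hr
  have hperm := hα.perm_gracefulValues
  rw [List.range_eq_range', List.range'_succ, List.range'_succ, List.map_cons, List.map_cons] at hperm
  have hperm₁ : ((gracefulValues (m + 2)).erase (α 0)).Perm (α 1 :: (List.range' 2 m).map α) := by
    simpa using (hperm.erase (α 0)).symm
  have hperm₂ : (((gracefulValues (m + 2)).erase (α 0)).erase (α 1)).Perm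
      ((List.range' 2 m).map α) := by
    simpa using hperm₁.erase (α 1)
  have hfresh := hα.hasFreshSteps m 1 (by omega) [|α 1 - α 0|] (by simp)
  have hsearch := canComplete_of_perm hperm₂.symm hfresh
  rw [hperm₂.length_eq, List.length_map, List.length_range'] at hsearch
  simp only [gracefulSearch, List.any_eq_true, Bool.and_eq_true, decide_eq_true_iff]
  exact ⟨α 0, hperm.mem_iff.mp List.mem_cons_self, α 1, hperm₁.mem_iff.mpr List.mem_cons_self,
    rfl, hsearch⟩

/-- For `r ∈ {4, 5, 8}` there is no graceful permutation of length `r` whose first absolute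
difference equals `2`. -/
theorem no_graceful_first_diff_two (r : ℕ) (hr : r ∈ ({4, 5, 8} : Set ℕ))
    (α : ℕ → ℤ) (hα : IsGraceful r α) : |α 1 - α 0| ≠ 2 := by
  intro h
  have hsearch := hα.gracefulSearch_eq_true (by rcases hr with rfl | rfl | rfl <;> norm_num)
  rw [h] at hsearch
  revert hsearch
  rcases hr with rfl | rfl | rfl <;> decide
end
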